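/- arXiv:1601.02695 — 3 statements merged into one kernel-verified Lean document; each statement's English description precedes it below -/
import Mathlib

section
/- Let σ : ℝ^d → ℝ^{d×m} satisfy the one-sided condition 2(x - x̄)·(b(x) - b(x̄)) + (p₁ - 1)|σ(x) - σ(x̄)|² ≤ L |x - x̄|² for all x, x̄ (with p₁ > 2), where b : ℝ^d → ℝ^d satisfies |b(x) - b(x̄)| ≤ L (1 + |x| + |x̄|)^ρ |x - x̄|. Then there exists K > 0 such that |σ(x) - σ(x̄)| ≤ K (1 + |x| + |x̄|)^{ρ/2} |x - x̄| for all x, x̄ ∈ ℝ^d. -/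
/-! By Cauchy–Schwarz and the growth bound on `b`, the one-sided condition gives
`(p₁ - 1) |σ(x) - σ(x̄)|² ≤ (L + 2 L s^ρ) |x - x̄|² ≤ 3 L s^ρ |x - x̄|²` with `s = 1 + |x| + |x̄|`
(using `s^ρ ≥ 1`); taking square roots yields the claim with `K = √(3L / (p₁ - 1))`. -/

open Real

lemma mul_sq_le_of_two_inner_add_mul_sq_le {E : Type*} [NormedAddCommGroup E]
    [InnerProductSpace ℝ E] {u v : E} {a c L M : ℝ}
    (h : 2 * inner ℝ u v + c * a ^ 2 ≤ L * ‖u‖ ^ 2) (hv : ‖v‖ ≤ M * ‖u‖) :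
    c * a ^ 2 ≤ (L + 2 * M) * ‖u‖ ^ 2 := by
  have hinner : -(M * ‖u‖ ^ 2) ≤ inner ℝ u v :=
    calc -(M * ‖u‖ ^ 2) ≤ -(‖u‖ * ‖v‖) := by
          nlinarith [mul_le_mul_of_nonneg_left hv (norm_nonneg u)]
      _ ≤ inner ℝ u v := neg_le_of_abs_le (abs_real_inner_le_norm u v)
  linarith

lemma le_sqrt_mul_rpow_half_mul {A B C s ρ : ℝ} (hB : 0 ≤ B) (hs : 0 ≤ s)
    (h : A ^ 2 ≤ C * s ^ ρ * B ^ 2) : A ≤ √C * s ^ (ρ / 2) * B := by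
  have hsqrt : √(C * s ^ ρ * B ^ 2) = √C * s ^ (ρ / 2) * B := by
    rw [sqrt_mul' _ (sq_nonneg B), sqrt_mul' _ (rpow_nonneg hs ρ), sqrt_sq hB,
      sqrt_eq_rpow (s ^ ρ), ← rpow_mul hs, mul_one_div]
  exact hsqrt ▸ le_sqrt_of_sq_le h

/-- The one-sided (monotonicity-type) condition A-3 together with the polynomial
Lipschitz estimate on the drift implies a polynomial Lipschitz estimate on the
diffusion coefficient.  The `d × m` matrix `σ(x)` is encoded as an element of
`EuclideanSpace ℝ (Fin d × Fin m)`, whose norm is the Hilbert–Schmidt norm. -/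
theorem stmt4 {d m : ℕ}
    (b : EuclideanSpace ℝ (Fin d) → EuclideanSpace ℝ (Fin d))
    (σ : EuclideanSpace ℝ (Fin d) → EuclideanSpace ℝ (Fin d × Fin m))
    (L ρ p₁ : ℝ) (hL : 0 < L) (hρ : 1 ≤ ρ) (hp₁ : 2 < p₁)
    (hmono : ∀ x y : EuclideanSpace ℝ (Fin d),
      2 * (inner ℝ (x - y) (b x - b y) : ℝ) + (p₁ - 1) * ‖σ x - σ y‖ ^ 2 ≤ L * ‖x - y‖ ^ 2)
    (hblip : ∀ x y : EuclideanSpace ℝ (Fin d),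
      ‖b x - b y‖ ≤ L * (1 + ‖x‖ + ‖y‖) ^ ρ * ‖x - y‖) :
    ∃ K > 0, ∀ x y : EuclideanSpace ℝ (Fin d),
      ‖σ x - σ y‖ ≤ K * (1 + ‖x‖ + ‖y‖) ^ (ρ / 2) * ‖x - y‖ := by
  have hp : 0 < p₁ - 1 := by linarith
  refine ⟨√(3 * L / (p₁ - 1)), sqrt_pos.mpr (by positivity), fun x y => ?_⟩
  set s := 1 + ‖x‖ + ‖y‖
  have hs : 1 ≤ s := by have := norm_nonneg x; have := norm_nonneg y; linarith
  have hsρ : 1 ≤ s ^ ρ := one_le_rpow hs (by linarith)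
  have hσ : (p₁ - 1) * ‖σ x - σ y‖ ^ 2 ≤ 3 * L * s ^ ρ * ‖x - y‖ ^ 2 :=
    calc (p₁ - 1) * ‖σ x - σ y‖ ^ 2 ≤ (L + 2 * (L * s ^ ρ)) * ‖x - y‖ ^ 2 :=
          mul_sq_le_of_two_inner_add_mul_sq_le (hmono x y) (hblip x y)
      _ ≤ 3 * L * s ^ ρ * ‖x - y‖ ^ 2 := by
          gcongr; nlinarith
  refine le_sqrt_mul_rpow_half_mul (norm_nonneg _) (by linarith) ?_
  rw [div_mul_eq_mul_div, div_mul_eq_mul_div, le_div_iff₀ hp]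
  linarith
end

section
/- Let b : ℝ^d → ℝ^d satisfy |b(x)| ≤ L (1 + |x|)^{ρ+1} for all x, with L > 0 and ρ ≥ 1. For n ∈ ℕ define the tamed coefficient b^n(x) := b(x) / (1 + n^{-1} |x|^{2ρ}). Then there exists K > 0, independent of n, such that |b^n(x)| ≤ min( K n^{1/2} (1 + |x|), |b(x)| ) for all x ∈ ℝ^d and all n ≥ 1. -/
set_option maxHeartbeats 1000000 in
/-- Bound on the tamed drift coefficient `bⁿ(x) = b(x)/(1 + n⁻¹|x|^{2ρ})`. -/
theorem stmt7 {d : ℕ} (b : EuclideanSpace ℝ (Fin d) → EuclideanSpace ℝ (Fin d))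
    (L ρ : ℝ) (hL : 0 < L) (hρ : 1 ≤ ρ)
    (hb : ∀ x : EuclideanSpace ℝ (Fin d), ‖b x‖ ≤ L * (1 + ‖x‖) ^ (ρ + 1)) :
    ∃ K > 0, ∀ (n : ℕ), 1 ≤ n → ∀ x : EuclideanSpace ℝ (Fin d),
      ‖(1 + (n : ℝ)⁻¹ * ‖x‖ ^ (2 * ρ))⁻¹ • b x‖
        ≤ min (K * (n : ℝ) ^ ((1 : ℝ) / 2) * (1 + ‖x‖)) ‖b x‖ := by
  have h2ρ0 : (0:ℝ) < (2:ℝ) ^ ρ := Real.rpow_pos_of_pos (by norm_num) _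
  refine ⟨(3/2) * 2 ^ ρ * L, by positivity, ?_⟩
  intro n hn x
  have hn1 : (1:ℝ) ≤ n := by exact_mod_cast hn
  have hn0 : (0:ℝ) < n := by linarith
  have hr0 : 0 ≤ ‖x‖ := norm_nonneg x
  have ht1 : (1:ℝ) ≤ (n:ℝ) ^ ((1:ℝ)/2) := Real.one_le_rpow hn1 (by norm_num)
  have hsqt : ((n:ℝ) ^ ((1:ℝ)/2)) ^ 2 = n := by
    rw [← Real.rpow_natCast ((n:ℝ) ^ ((1:ℝ)/2)) 2, ← Real.rpow_mul hn0.le]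
    norm_num
  have hs0 : 0 ≤ ‖x‖ ^ ρ := Real.rpow_nonneg hr0 _
  have hsq : ‖x‖ ^ (2*ρ) = (‖x‖ ^ ρ) ^ 2 := by
    rw [← Real.rpow_natCast (‖x‖ ^ ρ) 2, ← Real.rpow_mul hr0]
    ring_nf
  have hexp : (1 + ‖x‖) ^ (ρ + 1) = (1 + ‖x‖) ^ ρ * (1 + ‖x‖) := by
    rw [Real.rpow_add (by linarith : (0:ℝ) < 1 + ‖x‖), Real.rpow_one]
  -- (1+r)^ρ ≤ 2^ρ * (1 + r^ρ)
  have hpow : (1 + ‖x‖) ^ ρ ≤ 2 ^ ρ * (1 + ‖x‖ ^ ρ) := by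
    have hρ0 : 0 ≤ ρ := by linarith
    rcases le_total ‖x‖ 1 with h | h
    · have h1 : (1 + ‖x‖) ^ ρ ≤ (2:ℝ) ^ ρ :=
        Real.rpow_le_rpow (by linarith) (by linarith) hρ0
      nlinarith [h1, hs0, h2ρ0]
    · have h2 : (1 + ‖x‖) ^ ρ ≤ (2 * ‖x‖) ^ ρ :=
        Real.rpow_le_rpow (by linarith) (by linarith) hρ0
      have h3 : (2 * ‖x‖) ^ ρ = 2 ^ ρ * ‖x‖ ^ ρ :=
        Real.mul_rpow (by norm_num) hr0
      rw [h3] at h2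
      nlinarith [h2, h2ρ0]
  have hbx := hb x
  clear hb
  rw [hexp] at hbx
  -- Now generalize all rpow terms to opaque reals
  rw [hsq] at *
  generalize hA : (2:ℝ) ^ ρ = A at *
  generalize hT : ((n:ℝ) ^ ((1:ℝ)/2) : ℝ) = t at *
  generalize hS : (‖x‖ ^ ρ : ℝ) = s at *
  generalize hR : (‖x‖ : ℝ) = r at *
  have ht0 : (0:ℝ) < t := by linarith
  have hinv : (n:ℝ)⁻¹ * t ^ 2 = 1 := by
    rw [hsqt]; field_simp
  have hcnn : 0 ≤ (n:ℝ)⁻¹ * s ^ 2 := by positivity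
  set c : ℝ := 1 + (n:ℝ)⁻¹ * s ^ 2 with hc
  clear_value c
  have hc1 : 1 ≤ c := by rw [hc]; linarith
  have hc0 : 0 < c := by linarith
  have hnorm : ‖c⁻¹ • b x‖ = c⁻¹ * ‖b x‖ := by
    rw [norm_smul, Real.norm_eq_abs, abs_of_pos (inv_pos.mpr hc0)]
  rw [hnorm]
  have hbnn : 0 ≤ ‖b x‖ := norm_nonneg _
  refine le_min ?_ ?_
  · rw [inv_mul_le_iff₀ hc0]
    -- AM-GM : s ≤ (t/2) * c
    have amgm : s ≤ (t/2) * c := by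
      have key : 2 * t * s ≤ t ^ 2 + s ^ 2 := by nlinarith [sq_nonneg (s - t)]
      have hc2 : (t/2) * c = t/2 + (n:ℝ)⁻¹ * s^2 * t / 2 := by rw [hc]; ring
      have h1 : s ^ 2 = (n:ℝ)⁻¹ * s ^ 2 * t ^ 2 := by
        rw [mul_comm ((n:ℝ)⁻¹) (s^2), mul_assoc, hinv, mul_one]
      rw [hc2]
      nlinarith [key, sq_nonneg t]
    have h1tc : 1 ≤ t * c := by nlinarith [ht1, hc1]
    have h1s : 1 + s ≤ (3/2) * (t * c) := by nlinarith [amgm, h1tc]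
    have hpow2 : (1 + r) ^ ρ ≤ A * ((3/2) * (t * c)) := by
      calc (1 + r) ^ ρ ≤ A * (1 + s) := hpow
        _ ≤ A * ((3/2) * (t * c)) := by nlinarith [h1s, h2ρ0]
    have hr0' : (0:ℝ) ≤ 1 + r := by linarith
    calc ‖b x‖ ≤ L * ((1 + r) ^ ρ * (1 + r)) := hbx
      _ ≤ L * ((A * ((3/2) * (t * c))) * (1 + r)) := by
          have := mul_le_mul_of_nonneg_right hpow2 hr0'
          nlinarith [this, hL.le]
      _ = c * ((3/2) * A * L * t * (1 + r)) := by ring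
  · have hcinv : c⁻¹ ≤ 1 := by
      rw [inv_le_one_iff₀]; right; exact hc1
    nlinarith [hbnn, hcinv, inv_pos.mpr hc0]
end

section
/- Let σ : ℝ^d → ℝ^{d×m} satisfy |σ(x)|² ≤ L (1 + |x|)^{ρ+2} for all x, with L > 0 and ρ ≥ 1. For n ∈ ℕ define σ^n(x) := σ(x) / (1 + n^{-1}|x|^{2ρ}). Then there exists K > 0, independent of n, such that |σ^n(x)|² ≤ min( K n^{1/2} (1 + |x|²), |σ(x)|² ) for all x ∈ ℝ^d and all n ≥ 1. -/
/-!
Put `c = 1 + n⁻¹ ‖x‖^{2ρ}` and `u = ‖x‖^ρ`, so that `c = 1 + u² / n ≥ 1`; the bound by `‖σ x‖²`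
is just `c ≥ 1`. For the other one, `(1 + ‖x‖)^{ρ+2} ≤ 2^{ρ-1} (1 + u) · 2 (1 + ‖x‖²)` by the power
mean inequality, and `1 + u ≤ 2 √n c²`: for `u ≤ √n` because `c ≥ 1`, and for `u ≥ √n` because
`√n (u² / n)² = u (u / √n)³ ≥ u`.
-/

lemma Real.one_add_rpow_le {r p : ℝ} (hr : 0 ≤ r) (hp : 1 ≤ p) :
    (1 + r) ^ p ≤ 2 ^ (p - 1) * (1 + r ^ p) := by
  lift r to NNReal using hr
  have h : (1 + r) ^ p ≤ 2 ^ (p - 1) * (1 + r ^ p) := by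
    simpa using NNReal.rpow_add_le_mul_rpow_add_rpow 1 r hp
  exact_mod_cast h

lemma one_add_le_two_mul_one_add_sq_div_sq_sq {t u : ℝ} (ht : 1 ≤ t) (hu : 0 ≤ u) :
    1 + u ≤ 2 * t * (1 + u ^ 2 / t ^ 2) ^ 2 := by
  have ht0 : 0 < t := by linarith
  rcases le_total u t with hut | htu
  · have hc : 1 ≤ (1 + u ^ 2 / t ^ 2) ^ 2 := one_le_pow₀ (by simp; positivity)
    nlinarith
  · have hq : u ≤ t * (u ^ 2 / t ^ 2) ^ 2 := by
      rw [show t * (u ^ 2 / t ^ 2) ^ 2 = u * (u / t) ^ 3 by field_simp]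
      exact le_mul_of_one_le_right hu (one_le_pow₀ ((one_le_div ht0).2 htu))
    have hc : (u ^ 2 / t ^ 2) ^ 2 ≤ (1 + u ^ 2 / t ^ 2) ^ 2 := by gcongr; linarith
    nlinarith

lemma one_add_rpow_add_two_le {r n ρ : ℝ} (hr : 0 ≤ r) (hn : 1 ≤ n) (hρ : 1 ≤ ρ) :
    (1 + r) ^ (ρ + 2) ≤
      2 ^ (ρ + 1) * n ^ (1 / 2 : ℝ) * (1 + r ^ 2) * (1 + n⁻¹ * r ^ (2 * ρ)) ^ 2 := by
  have htn : (n ^ (1 / 2 : ℝ)) ^ 2 = n := by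
    rw [← Real.sqrt_eq_rpow, Real.sq_sqrt (by linarith)]
  set t := n ^ (1 / 2 : ℝ)
  have ht : 1 ≤ t := Real.one_le_rpow hn (by norm_num)
  have hrρ : r ^ (2 * ρ) = (r ^ ρ) ^ 2 := by
    rw [mul_comm, Real.rpow_mul hr, Real.rpow_two]
  have h1r : (1 + r) ^ 2 ≤ 2 * (1 + r ^ 2) := by nlinarith [sq_nonneg (1 - r)]
  have h2 : (2 : ℝ) ^ (ρ + 1) = 2 ^ (ρ - 1) * 2 ^ 2 := by
    rw [← Real.rpow_two, ← Real.rpow_add two_pos]; ring_nf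
  have hu := one_add_le_two_mul_one_add_sq_div_sq_sq ht (Real.rpow_nonneg hr ρ)
  rw [htn, ← hrρ, div_eq_inv_mul] at hu
  calc (1 + r) ^ (ρ + 2) = (1 + r) ^ ρ * (1 + r) ^ 2 := by
        rw [Real.rpow_add (by linarith), Real.rpow_two]
    _ ≤ 2 ^ (ρ - 1) * (1 + r ^ ρ) * (2 * (1 + r ^ 2)) := by
        gcongr
        exact Real.one_add_rpow_le hr hρ
    _ ≤ 2 ^ (ρ - 1) * (2 * t * (1 + n⁻¹ * r ^ (2 * ρ)) ^ 2) * (2 * (1 + r ^ 2)) := by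
        gcongr
    _ = _ := by rw [h2]; ring

/-- Bound on the tamed diffusion coefficient `σⁿ(x) = σ(x)/(1 + n⁻¹|x|^{2ρ})`. -/
theorem stmt8 {d m : ℕ}
    (σ : EuclideanSpace ℝ (Fin d) → EuclideanSpace ℝ (Fin d × Fin m))
    (L ρ : ℝ) (hL : 0 < L) (hρ : 1 ≤ ρ)
    (hσ : ∀ x : EuclideanSpace ℝ (Fin d), ‖σ x‖ ^ 2 ≤ L * (1 + ‖x‖) ^ (ρ + 2)) :
    ∃ K > 0, ∀ (n : ℕ), 1 ≤ n → ∀ x : EuclideanSpace ℝ (Fin d),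
      ‖(1 + (n : ℝ)⁻¹ * ‖x‖ ^ (2 * ρ))⁻¹ • σ x‖ ^ 2
        ≤ min (K * (n : ℝ) ^ ((1 : ℝ) / 2) * (1 + ‖x‖ ^ 2)) (‖σ x‖ ^ 2) := by
  refine ⟨L * 2 ^ (ρ + 1), by positivity, fun n hn x => ?_⟩
  have hn1 : (1 : ℝ) ≤ n := by exact_mod_cast hn
  set c := 1 + (n : ℝ)⁻¹ * ‖x‖ ^ (2 * ρ)
  have hc : 1 ≤ c := le_add_of_nonneg_right (by positivity)
  have hc2 : 0 < c ^ 2 := by positivity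
  rw [norm_smul, norm_inv, Real.norm_of_nonneg (by linarith), mul_pow, inv_pow, ← div_eq_inv_mul,
    le_min_iff]
  constructor
  · rw [div_le_iff₀ hc2]
    calc ‖σ x‖ ^ 2 ≤ L * (1 + ‖x‖) ^ (ρ + 2) := hσ x
      _ ≤ L * (2 ^ (ρ + 1) * n ^ (1 / 2 : ℝ) * (1 + ‖x‖ ^ 2) * c ^ 2) := by
          gcongr
          exact one_add_rpow_add_two_le (norm_nonneg x) hn1 hρ
      _ = _ := by ring
  · exact div_le_self (sq_nonneg _) (one_le_pow₀ hc)
end
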